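/- Let (X, X̃) be a Cauchy pair on V with eigenvalues {x_i} of X and {x̃_i} of X̃; let α_i = tr(E_i(X - X̃)) and α̃_j = tr(Ẽ_j(X̃ - X)), where E_i, Ẽ_j are the primitive idempotents of X and X̃. Then for every i, ∑_j α_i α̃_j / (x_i - x̃_j)^2 = -1. -/

import Mathlib

def IsCauchyPair (K V : Type*) [Field K] [AddCommGroup V] [Module K V]
    (X Xt : Module.End K V) : Prop :=
  (⨆ μ : K, X.eigenspace μ) = ⊤ ∧
  (⨆ μ : K, Xt.eigenspace μ) = ⊤ ∧
  Module.rank K (LinearMap.range (X - Xt)) = 1 ∧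
  ∀ W : Submodule K V, W.map (X : V →ₗ[K] V) ≤ W → W.map (Xt : V →ₗ[K] V) ≤ W →
    W = ⊥ ∨ W = ⊤

/-!
Write `X - X̃ = φ.smulRight u`, i.e. `X - X̃ = u ⊗ φ`. Since `E i * X = x i • E i` and
`Ẽ j * X̃ = x̃ j • Ẽ j`, applying `E i` to `X q - X̃ q = φ q • u` for the `x̃ j`-eigenvector
`q = Ẽ j u` gives `(x i - x̃ j) • E i q = φ q • E i u`, and symmetrically
`(x i - x̃ j) • Ẽ j p = φ p • Ẽ j u` for the `x i`-eigenvector `p = E i u`.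
Expanding `p = E i p = ∑ j, E i (Ẽ j p)` with these two identities gives
`p = (∑ j, φ p * φ (Ẽ j u) / (x i - x̃ j) ^ 2) • p`, while `α i = φ p` and `α̃ j = -φ (Ẽ j u)`.
Irreducibility is what makes this legitimate: `p ≠ 0`, since otherwise `ker (E i)` would be a
common invariant subspace, and hence `x i ≠ x̃ j`.
-/

open Module Submodule

section

variable {K V : Type*} [Field K] [AddCommGroup V] [Module K V]

lemma LinearMap.exists_eq_smulRight_of_rank_range_eq_one {V' : Type*} [AddCommGroup V']
    [Module K V'] {T : V →ₗ[K] V'} (hT : Module.rank K (LinearMap.range T) = 1) :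
    ∃ (φ : V →ₗ[K] K) (u : V'), φ ≠ 0 ∧ u ≠ 0 ∧ T = φ.smulRight u := by
  obtain ⟨v₀, hv₀, hspan⟩ := rank_eq_one_iff.mp hT
  have hu : (v₀ : V') ≠ 0 := by simpa using hv₀
  obtain ⟨g, hg⟩ := (LinearMap.toSpanSingleton K V' v₀).exists_leftInverse_of_injective
    (LinearMap.ker_toSpanSingleton K hu)
  have hT' : T = (g ∘ₗ T).smulRight (v₀ : V') := by
    ext v
    obtain ⟨c, hc⟩ := hspan ⟨T v, v, rfl⟩
    have hgc : g (c • (v₀ : V')) = c := by simpa using LinearMap.congr_fun hg c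
    have hc : c • (v₀ : V') = T v := congrArg Subtype.val hc
    rw [LinearMap.smulRight_apply, LinearMap.comp_apply, ← hc, hgc]
  have hT0 : T ≠ 0 := by
    rintro rfl
    simp at hT
  exact ⟨g ∘ₗ T, (v₀ : V'), fun h => hT0 (by rw [hT', h, LinearMap.zero_smulRight]), hu, hT'⟩

lemma LinearMap.trace_mul_smulRight [FiniteDimensional K V] (P : End K V) (ψ : V →ₗ[K] K)
    (u : V) : LinearMap.trace K V (P * ψ.smulRight u) = ψ (P u) := by
  have : P * ψ.smulRight u = ψ.smulRight (P u) := by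
    ext
    simp
  rw [this, LinearMap.trace_smulRight]

namespace Module.End

variable {ι : Type*} {X : End K V} {x : ι → K}

lemma eq_top_of_eigenspace_le (hX : ⨆ μ, X.eigenspace μ = ⊤)
    (hx : ∀ μ, X.HasEigenvalue μ → ∃ i, x i = μ) {W : Submodule K V}
    (hW : ∀ i, X.eigenspace (x i) ≤ W) : W = ⊤ := by
  refine eq_top_iff.2 (hX ▸ iSup_le fun μ => ?_)
  by_cases hμ : X.HasEigenvalue μ
  · obtain ⟨i, rfl⟩ := hx μ hμ
    exact hW i
  · rw [hasEigenvalue_iff, not_not] at hμ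
    simp [hμ]

lemma ext_of_eigenspace (hX : ⨆ μ, X.eigenspace μ = ⊤)
    (hx : ∀ μ, X.HasEigenvalue μ → ∃ i, x i = μ) {A B : End K V}
    (h : ∀ i, ∀ v ∈ X.eigenspace (x i), A v = B v) : A = B :=
  LinearMap.eqLocus_eq_top.1 (eq_top_of_eigenspace_le hX hx fun i v hv => h i v hv)

end Module.End

structure IsPrimitiveIdempotents {ι : Type*} (X : End K V) (x : ι → K) (E : ι → End K V) :
    Prop where
  iSup_eigenspace_eq_top : ⨆ μ, X.eigenspace μ = ⊤
  exists_eq_of_hasEigenvalue : ∀ μ, X.HasEigenvalue μ → ∃ i, x i = μ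
  apply_of_mem_eigenspace : ∀ i, ∀ v ∈ X.eigenspace (x i), E i v = v
  apply_of_mem_eigenspace_of_ne : ∀ i j, i ≠ j → ∀ v ∈ X.eigenspace (x j), E i v = 0

namespace IsPrimitiveIdempotents

variable {ι : Type*} {X : End K V} {x : ι → K} {E : ι → End K V}

lemma ext (hE : IsPrimitiveIdempotents X x E) {A B : End K V}
    (h : ∀ i, ∀ v ∈ X.eigenspace (x i), A v = B v) : A = B :=
  End.ext_of_eigenspace hE.iSup_eigenspace_eq_top hE.exists_eq_of_hasEigenvalue h

lemma apply_of_mem_eigenspace_eq_ite [DecidableEq ι] (hE : IsPrimitiveIdempotents X x E)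
    (i j : ι) {v : V} (hv : v ∈ X.eigenspace (x j)) : E i v = if i = j then v else 0 := by
  split_ifs with hij
  · subst hij
    exact hE.apply_of_mem_eigenspace i v hv
  · exact hE.apply_of_mem_eigenspace_of_ne i j hij v hv

lemma mul_eq_smul (hE : IsPrimitiveIdempotents X x E) (i : ι) : E i * X = x i • E i := by
  classical
  refine hE.ext fun j v hv => ?_
  rw [End.mul_apply, LinearMap.smul_apply, End.mem_eigenspace_iff.1 hv, map_smul,
    hE.apply_of_mem_eigenspace_eq_ite i j hv]
  split_ifs with hij <;> simp [hij]

lemma apply_mem_eigenspace (hE : IsPrimitiveIdempotents X x E) (i : ι) (v : V) :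
    E i v ∈ X.eigenspace (x i) := by
  classical
  suffices h : (X.eigenspace (x i)).comap (E i) = ⊤ from
    mem_comap.1 (h ▸ mem_top)
  refine End.eq_top_of_eigenspace_le hE.iSup_eigenspace_eq_top hE.exists_eq_of_hasEigenvalue
    fun j w hw => ?_
  rw [mem_comap, hE.apply_of_mem_eigenspace_eq_ite i j hw]
  split_ifs with hij
  · exact hij ▸ hw
  · exact zero_mem _

lemma sum_eq_one [Fintype ι] (hE : IsPrimitiveIdempotents X x E) : ∑ i, E i = 1 := by
  classical
  refine hE.ext fun j v hv => ?_
  simp [LinearMap.sum_apply, hE.apply_of_mem_eigenspace_eq_ite _ j hv]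

lemma ne_zero (hE : IsPrimitiveIdempotents X x E) {i : ι} (hi : X.HasEigenvalue (x i)) :
    E i ≠ 0 := by
  obtain ⟨v, hv, hv0⟩ := hi.exists_hasEigenvector
  intro h
  exact hv0 (by rw [← hE.apply_of_mem_eigenspace i v hv, h, LinearMap.zero_apply])

end IsPrimitiveIdempotents

def IsIrreduciblePair (X Xt : End K V) : Prop :=
  ∀ W : Submodule K V, W.map X ≤ W → W.map Xt ≤ W → W = ⊥ ∨ W = ⊤

lemma IsIrreduciblePair.symm {X Xt : End K V} (h : IsIrreduciblePair X Xt) :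
    IsIrreduciblePair Xt X :=
  fun W hXt hX => h W hX hXt

section RankOnePerturbation

variable {X Xt : End K V} {φ : V →ₗ[K] K} {u : V}

lemma sub_eq_neg_smulRight_of_sub_eq_smulRight (hT : X - Xt = φ.smulRight u) :
    Xt - X = (-φ).smulRight u := by
  rw [← neg_sub, hT]
  ext
  simp

lemma eq_zero_of_mem_eigenspace_of_apply_eq_zero
    (hirr : IsIrreduciblePair X Xt) (hT : X - Xt = φ.smulRight u) (hφ : φ ≠ 0) {μ : K} {w : V}
    (hw : w ∈ X.eigenspace μ) (hφw : φ w = 0) : w = 0 := by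
  have hXw : X w = μ • w := End.mem_eigenspace_iff.1 hw
  have hXtw : Xt w = μ • w := by
    have := LinearMap.congr_fun hT w
    rw [LinearMap.sub_apply, LinearMap.smulRight_apply, hφw, zero_smul, sub_eq_zero] at this
    rw [← this, hXw]
  have hinv : ∀ A : End K V, A w = μ • w → (K ∙ w).map A ≤ K ∙ w := fun A hA => by
    rw [map_span_le]
    intro y hy
    rw [Set.mem_singleton_iff.1 hy, hA]
    exact smul_mem _ _ (mem_span_singleton_self w)
  rcases hirr _ (hinv X hXw) (hinv Xt hXtw) with hbot | htop
  · exact span_singleton_eq_bot.1 hbot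
  · refine absurd (LinearMap.ext fun v => ?_) hφ
    obtain ⟨c, rfl⟩ := mem_span_singleton.1 (htop ▸ mem_top : v ∈ K ∙ w)
    simp [hφw]

lemma apply_ne_zero_of_mul_eq_smul (hirr : IsIrreduciblePair X Xt)
    (hT : X - Xt = φ.smulRight u) (hu : u ≠ 0) {P : End K V} {c : K}
    (hP : P * X = c • P) (hP0 : P ≠ 0) : P u ≠ 0 := by
  intro hPu
  have hPX : ∀ w, P (X w) = c • P w := fun w => LinearMap.congr_fun hP w
  have hXt : ∀ w, Xt w = X w - φ w • u := fun w => by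
    rw [← LinearMap.smulRight_apply, ← hT, LinearMap.sub_apply, sub_sub_cancel]
  have hmapX : (LinearMap.ker P).map X ≤ LinearMap.ker P := by
    rintro _ ⟨w, hw, rfl⟩
    simp [LinearMap.mem_ker.1 hw, hPX]
  have hmapXt : (LinearMap.ker P).map Xt ≤ LinearMap.ker P := by
    rintro _ ⟨w, hw, rfl⟩
    simp [LinearMap.mem_ker.1 hw, hPX, hXt, hPu]
  rcases hirr _ hmapX hmapXt with hbot | htop
  · exact hu (by simpa [hbot] using LinearMap.mem_ker.2 hPu)
  · exact hP0 (LinearMap.ker_eq_top.1 htop)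

lemma sub_smul_apply_eq_smul_apply (hT : X - Xt = φ.smulRight u) {P : End K V} {a b : K}
    {q : V} (hP : P * X = a • P) (hq : Xt q = b • q) : (a - b) • P q = φ q • P u := by
  have h := LinearMap.congr_fun hP q
  have hXq : X q = b • q + φ q • u := by
    rw [← hq, ← LinearMap.smulRight_apply, ← hT, LinearMap.sub_apply, add_sub_cancel]
  rw [End.mul_apply, LinearMap.smul_apply, hXq, map_add, map_smul, map_smul] at h
  rw [sub_smul, ← h, add_sub_cancel_left]

variable {ι ι' : Type*} {x : ι → K} {xt : ι' → K} {E : ι → End K V} {Et : ι' → End K V}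

lemma eigenvalue_ne_of_apply_ne_zero (hirr : IsIrreduciblePair X Xt)
    (hT : X - Xt = φ.smulRight u) (hφ : φ ≠ 0) (hE : IsPrimitiveIdempotents X x E)
    (hEt : IsPrimitiveIdempotents Xt xt Et) {i : ι} {j : ι'} (hp : E i u ≠ 0)
    (hq : Et j u ≠ 0) : x i ≠ xt j := by
  intro h
  have hpmem := hE.apply_mem_eigenspace i u
  have := sub_smul_apply_eq_smul_apply (sub_eq_neg_smulRight_of_sub_eq_smulRight hT)
    (hEt.mul_eq_smul j) (End.mem_eigenspace_iff.1 hpmem)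
  rw [h, sub_self, zero_smul, eq_comm, smul_eq_zero, LinearMap.neg_apply, neg_eq_zero] at this
  exact hp (eq_zero_of_mem_eigenspace_of_apply_eq_zero hirr hT hφ hpmem (this.resolve_right hq))

lemma sum_mul_div_sub_sq_eq_one [Fintype ι'] (hT : X - Xt = φ.smulRight u)
    (hE : IsPrimitiveIdempotents X x E) (hEt : IsPrimitiveIdempotents Xt xt Et) {i : ι}
    (hp : E i u ≠ 0) (hne : ∀ j, x i ≠ xt j) :
    ∑ j, φ (E i u) * φ (Et j u) / (x i - xt j) ^ 2 = 1 := by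
  set p := E i u
  have hpmem : p ∈ X.eigenspace (x i) := hE.apply_mem_eigenspace i u
  have hEtp : ∀ j, Et j p = (φ p / (x i - xt j)) • Et j u := fun j => by
    have h := sub_smul_apply_eq_smul_apply (sub_eq_neg_smulRight_of_sub_eq_smulRight hT)
      (hEt.mul_eq_smul j) (End.mem_eigenspace_iff.1 hpmem)
    rw [LinearMap.neg_apply, neg_smul, ← neg_sub, neg_smul, neg_inj] at h
    rw [div_eq_inv_mul, mul_smul, ← h, inv_smul_smul₀ (sub_ne_zero.2 (hne j))]
  have hEq : ∀ j, E i (Et j u) = (φ (Et j u) / (x i - xt j)) • p := fun j => by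
    have h := sub_smul_apply_eq_smul_apply hT (hE.mul_eq_smul i)
      (End.mem_eigenspace_iff.1 (hEt.apply_mem_eigenspace j u))
    rw [div_eq_inv_mul, mul_smul, ← h, inv_smul_smul₀ (sub_ne_zero.2 (hne j))]
  have hsum : (∑ j, φ p * φ (Et j u) / (x i - xt j) ^ 2) • p = p := calc
    _ = E i (∑ j, Et j p) := by
      simp only [map_sum, hEtp, map_smul, hEq, smul_smul, Finset.sum_smul]
      congr! 2
      rw [div_mul_div_comm, ← sq]
    _ = E i p := by rw [← LinearMap.sum_apply, hEt.sum_eq_one, End.one_apply]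
    _ = p := hE.apply_of_mem_eigenspace i p hpmem
  exact smul_left_injective K hp (hsum.trans (one_smul K p).symm)

end RankOnePerturbation

end

theorem stmt15_general {K V : Type*} [Field K] [AddCommGroup V] [Module K V] [FiniteDimensional K V]
    {n : ℕ} {X Xt : Module.End K V} (h : IsCauchyPair K V X Xt)
    (x : Fin n → K)
    (hxeig : ∀ i, X.HasEigenvalue (x i))
    (hxall : ∀ μ : K, X.HasEigenvalue μ → ∃ i, x i = μ)
    (xt : Fin n → K)
    (hxteig : ∀ i, Xt.HasEigenvalue (xt i))
    (hxtall : ∀ μ : K, Xt.HasEigenvalue μ → ∃ i, xt i = μ)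
    (E : Fin n → Module.End K V)
    (hE1 : ∀ i, ∀ u ∈ X.eigenspace (x i), E i u = u)
    (hE0 : ∀ i j, i ≠ j → ∀ u ∈ X.eigenspace (x j), E i u = 0)
    (Et : Fin n → Module.End K V)
    (hEt1 : ∀ i, ∀ u ∈ Xt.eigenspace (xt i), Et i u = u)
    (hEt0 : ∀ i j, i ≠ j → ∀ u ∈ Xt.eigenspace (xt j), Et i u = 0)
    (i : Fin n) :
    ∑ j, (LinearMap.trace K V (E i * (X - Xt)) * LinearMap.trace K V (Et j * (Xt - X))) /
        (x i - xt j) ^ 2 = -1 := by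
  obtain ⟨hX, hXt, hrank, hirr : IsIrreduciblePair X Xt⟩ := h
  obtain ⟨φ, u, hφ, hu, hT⟩ := LinearMap.exists_eq_smulRight_of_rank_range_eq_one hrank
  have hTt := sub_eq_neg_smulRight_of_sub_eq_smulRight hT
  have hE : IsPrimitiveIdempotents X x E := ⟨hX, hxall, hE1, hE0⟩
  have hEt : IsPrimitiveIdempotents Xt xt Et := ⟨hXt, hxtall, hEt1, hEt0⟩
  have hp : E i u ≠ 0 :=
    apply_ne_zero_of_mul_eq_smul hirr hT hu (hE.mul_eq_smul i) (hE.ne_zero (hxeig i))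
  have hq : ∀ j, Et j u ≠ 0 := fun j =>
    apply_ne_zero_of_mul_eq_smul hirr.symm hTt hu (hEt.mul_eq_smul j) (hEt.ne_zero (hxteig j))
  rw [hT, hTt, ← sum_mul_div_sub_sq_eq_one hT hE hEt hp
    fun j => eigenvalue_ne_of_apply_ne_zero hirr hT hφ hE hEt hp (hq j), ← Finset.sum_neg_distrib]
  simp only [LinearMap.trace_mul_smulRight, LinearMap.neg_apply, mul_neg, neg_div]

theorem stmt15 {K V : Type*} [Field K] [AddCommGroup V] [Module K V] [FiniteDimensional K V]
    {n : ℕ} {X Xt : Module.End K V} (h : IsCauchyPair K V X Xt)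
    (x : Fin n → K) (hxinj : Function.Injective x)
    (hxeig : ∀ i, X.HasEigenvalue (x i))
    (hxall : ∀ μ : K, X.HasEigenvalue μ → ∃ i, x i = μ)
    (xt : Fin n → K) (hxtinj : Function.Injective xt)
    (hxteig : ∀ i, Xt.HasEigenvalue (xt i))
    (hxtall : ∀ μ : K, Xt.HasEigenvalue μ → ∃ i, xt i = μ)
    (E : Fin n → Module.End K V)
    (hE1 : ∀ i, ∀ u ∈ X.eigenspace (x i), E i u = u)
    (hE0 : ∀ i j, i ≠ j → ∀ u ∈ X.eigenspace (x j), E i u = 0)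
    (Et : Fin n → Module.End K V)
    (hEt1 : ∀ i, ∀ u ∈ Xt.eigenspace (xt i), Et i u = u)
    (hEt0 : ∀ i j, i ≠ j → ∀ u ∈ Xt.eigenspace (xt j), Et i u = 0)
    (i : Fin n) :
    ∑ j, (LinearMap.trace K V (E i * (X - Xt)) * LinearMap.trace K V (Et j * (Xt - X))) /
        (x i - xt j) ^ 2 = -1 :=
  stmt15_general h x hxeig hxall xt hxteig hxtall E hE1 hE0 Et hEt1 hEt0 i
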